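/- arXiv:0908.1597 — 2 statements merged into one kernel-verified Lean document; each statement's English description precedes it below -/
import Mathlib

section
/- Let V : [0,1]ⁿ → ℝ be continuous, let θ > 0, and set S_θ := { x ∈ (0,1)ⁿ : V(x) ≥ inf_{[0,1]ⁿ} V + θ }. Then lim_{T → 0⁺} [ ∫_{S_θ} exp(−V(x)/T) dx ] / [ ∫_{(0,1)ⁿ} exp(−V(x)/T) dx ] = 0. -/
open MeasureTheory Real Set Filter Topology
open scoped ENNReal

/-!
On `S_θ` the Boltzmann weight `exp (-V / T)` is at most `exp (-(m + θ) / T)`, `m = min V`, while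
near a minimiser there is an open set `U` of positive volume on which `V < m + θ / 2`, so the
partition function is at least `vol U * exp (-(m + θ / 2) / T)`. The ratio is therefore
`O(exp (-θ / (2 T)))`, which tends to `0` as `T → 0⁺`.
-/

lemma tendsto_exp_neg_div_nhdsGT_zero {δ : ℝ} (hδ : 0 < δ) :
    Tendsto (fun T : ℝ => exp (-δ / T)) (𝓝[>] 0) (𝓝 0) := by
  have h : Tendsto (fun T : ℝ => -δ / T) (𝓝[>] 0) atBot := by
    simpa only [neg_div, div_eq_mul_inv, neg_mul, Function.comp_def] using
      tendsto_neg_atTop_atBot.comp (tendsto_inv_nhdsGT_zero.const_mul_atTop hδ)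
  exact tendsto_exp_atBot.comp h

lemma ContinuousWithinAt.exists_mem_lt_of_mem_closure {X β : Type*} [TopologicalSpace X]
    [TopologicalSpace β] [LinearOrder β] [OrderTopology β] {f : X → β} {s : Set X} {x : X} {c : β}
    (hf : ContinuousWithinAt f s x) (hx : x ∈ closure s) (hc : f x < c) : ∃ y ∈ s, f y < c := by
  have := mem_closure_iff_nhdsWithin_neBot.1 hx
  obtain ⟨y, hfy, hy⟩ := ((hf.eventually (Iio_mem_nhds hc)).and self_mem_nhdsWithin).exists
  exact ⟨y, hy, hfy⟩

section GibbsRatio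

variable {α : Type*} [MeasurableSpace α] {μ : Measure α} {V : α → ℝ} {S D U : Set α} {T a b : ℝ}

lemma setIntegral_exp_neg_div_le (hS : μ S < ∞) (hT : 0 ≤ T) (ha : ∀ x ∈ S, a ≤ V x) :
    ∫ x in S, exp (-V x / T) ∂μ ≤ exp (-a / T) * μ.real S := by
  refine (Real.le_norm_self _).trans (norm_setIntegral_le_of_norm_le_const hS fun x hx => ?_)
  rw [norm_of_nonneg (exp_pos _).le]
  exact exp_le_exp.2 (by gcongr; exact ha x hx)

lemma exp_neg_div_mul_le_setIntegral (hD : IntegrableOn (fun x => exp (-V x / T)) D μ)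
    (hUD : U ⊆ D) (hU : MeasurableSet U) (hU_fin : μ U ≠ ∞) (hT : 0 ≤ T)
    (hb : ∀ x ∈ U, V x ≤ b) :
    exp (-b / T) * μ.real U ≤ ∫ x in D, exp (-V x / T) ∂μ :=
  calc exp (-b / T) * μ.real U
      ≤ ∫ x in U, exp (-V x / T) ∂μ :=
        setIntegral_ge_of_const_le_real hU hU_fin
          (fun x hx => exp_le_exp.2 (by gcongr; exact hb x hx)) (hD.mono_set hUD)
    _ ≤ ∫ x in D, exp (-V x / T) ∂μ :=
        setIntegral_mono_set hD (ae_of_all _ fun _ => (exp_pos _).le) hUD.eventuallyLE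

lemma gibbs_ratio_le (hD : IntegrableOn (fun x => exp (-V x / T)) D μ) (hS : μ S < ∞)
    (hUD : U ⊆ D) (hU : MeasurableSet U) (hU_pos : 0 < μ U) (hU_fin : μ U ≠ ∞) (hT : 0 < T)
    (ha : ∀ x ∈ S, a ≤ V x) (hb : ∀ x ∈ U, V x ≤ b) :
    (∫ x in S, exp (-V x / T) ∂μ) / ∫ x in D, exp (-V x / T) ∂μ
      ≤ μ.real S / μ.real U * exp (-(a - b) / T) := by
  have hU_real : 0 < μ.real U := ENNReal.toReal_pos hU_pos.ne' hU_fin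
  calc (∫ x in S, exp (-V x / T) ∂μ) / ∫ x in D, exp (-V x / T) ∂μ
      ≤ exp (-a / T) * μ.real S / (exp (-b / T) * μ.real U) :=
        div_le_div₀ (by positivity) (setIntegral_exp_neg_div_le hS hT.le ha) (by positivity)
          (exp_neg_div_mul_le_setIntegral hD hUD hU hU_fin hT.le hb)
    _ = μ.real S / μ.real U * exp (-(a - b) / T) := by
        rw [show -(a - b) / T = -a / T - -b / T by ring, exp_sub]
        ring

theorem tendsto_gibbs_ratio_zero (hD : ∀ T > 0, IntegrableOn (fun x => exp (-V x / T)) D μ)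
    (hS : μ S < ∞) (hUD : U ⊆ D) (hU : MeasurableSet U) (hU_pos : 0 < μ U) (hU_fin : μ U ≠ ∞)
    (hab : b < a) (ha : ∀ x ∈ S, a ≤ V x) (hb : ∀ x ∈ U, V x ≤ b) :
    Tendsto (fun T => (∫ x in S, exp (-V x / T) ∂μ) / ∫ x in D, exp (-V x / T) ∂μ)
      (𝓝[>] 0) (𝓝 0) := by
  have hbound := (tendsto_exp_neg_div_nhdsGT_zero (sub_pos.2 hab)).const_mul
    (μ.real S / μ.real U)
  rw [mul_zero] at hbound
  refine tendsto_of_tendsto_of_tendsto_of_le_of_le' tendsto_const_nhds hbound ?_ ?_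
  · exact Eventually.of_forall fun T => div_nonneg
      (integral_nonneg fun _ => (exp_pos _).le) (integral_nonneg fun _ => (exp_pos _).le)
  · filter_upwards [self_mem_nhdsWithin] with T (hT : 0 < T)
    exact gibbs_ratio_le (hD T hT) hS hUD hU hU_pos hU_fin hT ha hb

end GibbsRatio

/-- as `T → 0⁺` the Gibbs distribution concentrates away from
`S_θ = {x : V(x) ≥ inf V + θ}`: the Gibbs probability of `S_θ` tends to `0`. -/
theorem gibbs_concentration
    (n : ℕ) (V : (Fin n → ℝ) → ℝ)
    (hV : ContinuousOn V (Set.pi Set.univ fun _ : Fin n => Set.Icc (0 : ℝ) 1))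
    (θ : ℝ) (hθ : 0 < θ) :
    let cube : Set (Fin n → ℝ) := Set.pi Set.univ fun _ : Fin n => Set.Ioo (0 : ℝ) 1
    let closedCube : Set (Fin n → ℝ) := Set.pi Set.univ fun _ : Fin n => Set.Icc (0 : ℝ) 1
    let S : Set (Fin n → ℝ) := {x ∈ cube | sInf (V '' closedCube) + θ ≤ V x}
    Tendsto (fun T : ℝ =>
        (∫ x in S, Real.exp (-(V x) / T)) / ∫ x in cube, Real.exp (-(V x) / T))
      (𝓝[>] 0) (𝓝 0) := by
  intro cube closedCube S
  have hcompact : IsCompact closedCube := isCompact_univ_pi fun _ => isCompact_Icc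
  have hsub : cube ⊆ closedCube := pi_mono fun _ _ => Ioo_subset_Icc_self
  have hfin : ∀ s ⊆ cube, volume s < ∞ := fun s hs =>
    (measure_mono (hs.trans hsub)).trans_lt hcompact.measure_lt_top
  obtain ⟨x₀, hx₀, hmin⟩ := hcompact.exists_sInf_image_eq ⟨0, fun _ _ => ⟨le_rfl, zero_le_one⟩⟩ hV
  set m := sInf (V '' closedCube)
  let U := cube ∩ V ⁻¹' Iio (m + θ / 2)
  have hU_open : IsOpen U := (hV.mono hsub).isOpen_inter_preimage
    (isOpen_set_pi finite_univ fun _ _ => isOpen_Ioo) isOpen_Iio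
  have hU_ne : U.Nonempty := by
    have hx₀_cl : x₀ ∈ closure cube := by
      rw [closure_pi_set]
      simpa only [closure_Ioo zero_ne_one] using hx₀
    exact ((hV x₀ hx₀).mono hsub).exists_mem_lt_of_mem_closure hx₀_cl (by linarith)
  exact tendsto_gibbs_ratio_zero
    (fun T _ => ((continuous_exp.comp_continuousOn (hV.neg.div_const T)).integrableOn_compact
      hcompact).mono_set hsub)
    (hfin S fun _ hx => hx.1) inter_subset_left hU_open.measurableSet
    (hU_open.measure_pos volume hU_ne) (hfin U inter_subset_left).ne
    (by linarith : m + θ / 2 < m + θ) (fun _ hx => hx.2) (fun _ hx => hx.2.le)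
end

section
/- Let V, Ṽ : [0,1]ⁿ → ℝ be continuous, let θ > 0, and set S_θ := { x ∈ (0,1)ⁿ : V(x) ≥ inf_{[0,1]ⁿ} V + θ }. Let (T_k) and (Γ_k) be sequences with T_k > 0, Γ_k ≥ 0, T_k → 0 and Γ_k/T_k → 0 as k → ∞. Then lim_{k→∞} [ ∫_{S_θ} exp(−(V(x) − Γ_k Ṽ(x))/T_k) dx ] / [ ∫_{(0,1)ⁿ} exp(−(V(x) − Γ_k Ṽ(x))/T_k) dx ] = 0. -/
/-!
Write `m = inf V`, `E_k = V - Γ_k Ṽ`, and let `M` bound `|Ṽ|` on the closed cube. On `S_θ` the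
energy satisfies `E_k ≥ m + θ - Γ_k M`, while on the open set `U = {x ∈ (0,1)ⁿ : V x < m + θ/2}`,
which is nonempty because the minimum of `V` is attained on the closure of the open cube, it
satisfies `E_k ≤ m + θ/2 + Γ_k M`. Comparing the weights `exp (-E_k / T_k)` on the two sets
bounds the ratio by `vol S_θ / vol U · exp ((2 M Γ_k - θ/2) / T_k)`, which tends to `0` since
`Γ_k / T_k → 0` while `θ / (2 T_k) → ∞`.
-/

open MeasureTheory Real Set Filter Topology

section SetIntegralRatio

variable {X : Type*} [MeasurableSpace X] {μ : Measure X} {A S U : Set X}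

theorem setIntegral_div_setIntegral_le {f : X → ℝ} {α β : ℝ} (hf : IntegrableOn f A μ)
    (hf₀ : 0 ≤ f) (hSA : S ⊆ A) (hUA : U ⊆ A) (hU : MeasurableSet U) (hA : μ A ≠ ⊤)
    (hU₀ : μ U ≠ 0) (hβ : 0 < β) (hfS : ∀ x ∈ S, f x ≤ α) (hfU : ∀ x ∈ U, β ≤ f x) :
    (∫ x in S, f x ∂μ) / ∫ x in A, f x ∂μ ≤ μ.real S * α / (μ.real U * β) := by
  have hnum : ‖∫ x in S, f x ∂μ‖ ≤ α * μ.real S :=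
    norm_setIntegral_le_of_norm_le_const (measure_lt_top_of_subset hSA hA) fun x hx =>
      (Real.norm_of_nonneg (hf₀ x)).trans_le (hfS x hx)
  have hUreal : 0 < μ.real U :=
    ENNReal.toReal_pos hU₀ (measure_lt_top_of_subset hUA hA).ne
  have hden : β * μ.real U ≤ ∫ x in A, f x ∂μ :=
    calc β * μ.real U ≤ ∫ x in U, f x ∂μ :=
          setIntegral_ge_of_const_le_real hU (measure_lt_top_of_subset hUA hA).ne hfU
            (hf.mono_set hUA)
      _ ≤ ∫ x in A, f x ∂μ :=
          setIntegral_mono_set hf (ae_of_all _ hf₀) hUA.eventuallyLE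
  rw [mul_comm (μ.real S), mul_comm (μ.real U)]
  exact div_le_div₀ ((norm_nonneg _).trans hnum) ((le_abs_self _).trans hnum)
    (mul_pos hβ hUreal) hden

theorem setIntegral_exp_div_setIntegral_exp_le {E : X → ℝ} {T a b : ℝ}
    (hf : IntegrableOn (fun x => exp (-E x / T)) A μ) (hSA : S ⊆ A) (hUA : U ⊆ A)
    (hU : MeasurableSet U) (hA : μ A ≠ ⊤) (hU₀ : μ U ≠ 0) (hT : 0 < T)
    (hES : ∀ x ∈ S, a ≤ E x) (hEU : ∀ x ∈ U, E x ≤ b) :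
    (∫ x in S, exp (-E x / T) ∂μ) / ∫ x in A, exp (-E x / T) ∂μ ≤
      μ.real S / μ.real U * exp ((b - a) / T) := by
  have key := setIntegral_div_setIntegral_le hf (fun x => (exp_pos _).le) hSA hUA hU hA hU₀
    (exp_pos (-b / T)) (α := exp (-a / T))
    (fun x hx => exp_le_exp.mpr (by gcongr; exact hES x hx))
    (fun x hx => exp_le_exp.mpr (by gcongr; exact hEU x hx))
  rwa [mul_div_mul_comm, ← exp_sub, ← sub_div, neg_sub_neg] at key

theorem setIntegral_exp_perturbed_div_le {V W : X → ℝ} {Γ T M a b : ℝ}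
    (hf : IntegrableOn (fun x => exp (-(V x - Γ * W x) / T)) A μ) (hSA : S ⊆ A) (hUA : U ⊆ A)
    (hU : MeasurableSet U) (hA : μ A ≠ ⊤) (hU₀ : μ U ≠ 0) (hT : 0 < T) (hΓ : 0 ≤ Γ)
    (hW : ∀ x ∈ A, |W x| ≤ M) (hVS : ∀ x ∈ S, a ≤ V x) (hVU : ∀ x ∈ U, V x ≤ b) :
    (∫ x in S, exp (-(V x - Γ * W x) / T) ∂μ) / ∫ x in A, exp (-(V x - Γ * W x) / T) ∂μ ≤
      μ.real S / μ.real U * exp ((2 * M * Γ - (a - b)) / T) := by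
  have hΓW : ∀ x ∈ A, |Γ * W x| ≤ Γ * M := fun x hx => by
    rw [abs_mul, abs_of_nonneg hΓ]
    exact mul_le_mul_of_nonneg_left (hW x hx) hΓ
  refine (setIntegral_exp_div_setIntegral_exp_le hf hSA hUA hU hA hU₀ hT
    (a := a - Γ * M) (b := b + Γ * M) (fun x hx => ?_) (fun x hx => ?_)).trans_eq ?_
  · linarith [hVS x hx, (abs_le.mp (hΓW x (hSA hx))).2]
  · linarith [hVU x hx, (abs_le.mp (hΓW x (hUA hx))).1]
  · rw [show b + Γ * M - (a - Γ * M) = 2 * M * Γ - (a - b) by ring]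

end SetIntegralRatio

theorem IsOpen.measure_inter_preimage_Iio_pos {X α : Type*} [TopologicalSpace X]
    [MeasurableSpace X] [LinearOrder α] [TopologicalSpace α] [OrderTopology α]
    {μ : Measure X} [μ.IsOpenPosMeasure] {s : Set X} {V : X → α} {x₀ : X} {c : α}
    (hs : IsOpen s) (hV : ContinuousOn V (closure s)) (hx₀ : x₀ ∈ closure s) (hc : V x₀ < c) :
    0 < μ (s ∩ V ⁻¹' Iio c) := by
  refine ((hV.mono subset_closure).isOpen_inter_preimage hs isOpen_Iio).measure_pos μ ?_
  have : (𝓝[s] x₀).NeBot := mem_closure_iff_nhdsWithin_neBot.mp hx₀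
  have hlt : ∀ᶠ x in 𝓝[closure s] x₀, V x < c := hV x₀ hx₀ (Iio_mem_nhds hc)
  exact (eventually_mem_nhdsWithin.and (hlt.filter_mono (nhdsWithin_mono _ subset_closure))).exists

theorem tendsto_exp_div_of_tendsto_div {ι : Type*} {l : Filter ι} {T Γ : ι → ℝ}
    (hT : Tendsto T l (𝓝[>] 0)) (hΓT : Tendsto (fun k => Γ k / T k) l (𝓝 0)) (c : ℝ) {δ : ℝ}
    (hδ : 0 < δ) : Tendsto (fun k => exp ((c * Γ k - δ) / T k)) l (𝓝 0) := by
  have hinv : Tendsto (fun k => -δ * (T k)⁻¹) l atBot :=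
    (tendsto_inv_nhdsGT_zero.comp hT).const_mul_atTop_of_neg (neg_neg_of_pos hδ)
  have hsum : Tendsto (fun k => c * (Γ k / T k) + -δ * (T k)⁻¹) l atBot := by
    simpa using (hΓT.const_mul c).add_atBot hinv
  refine tendsto_exp_atBot.comp (hsum.congr fun k => ?_)
  ring

/-- if `T_k → 0` and `Γ_k/T_k → 0`, the Gibbs-like distribution of
`V - Γ_k Ṽ` at temperature `T_k` gives vanishing probability to
`S_θ = {x : V(x) ≥ inf V + θ}`. -/
theorem gibbs_like_concentration_joint
    (n : ℕ) (V Vt : (Fin n → ℝ) → ℝ)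
    (hV : ContinuousOn V (Set.pi Set.univ fun _ : Fin n => Set.Icc (0 : ℝ) 1))
    (hVt : ContinuousOn Vt (Set.pi Set.univ fun _ : Fin n => Set.Icc (0 : ℝ) 1))
    (θ : ℝ) (hθ : 0 < θ)
    (T Γ : ℕ → ℝ) (hT : ∀ k, 0 < T k) (hΓ : ∀ k, 0 ≤ Γ k)
    (hTlim : Tendsto T atTop (𝓝 0))
    (hratio : Tendsto (fun k => Γ k / T k) atTop (𝓝 0)) :
    let cube : Set (Fin n → ℝ) := Set.pi Set.univ fun _ : Fin n => Set.Ioo (0 : ℝ) 1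
    let closedCube : Set (Fin n → ℝ) := Set.pi Set.univ fun _ : Fin n => Set.Icc (0 : ℝ) 1
    let S : Set (Fin n → ℝ) := {x ∈ cube | sInf (V '' closedCube) + θ ≤ V x}
    Tendsto (fun k : ℕ =>
        (∫ x in S, Real.exp (-(V x - Γ k * Vt x) / T k)) /
          ∫ x in cube, Real.exp (-(V x - Γ k * Vt x) / T k))
      atTop (𝓝 0) := by
  intro cube closedCube S
  have hcube : IsOpen cube := isOpen_set_pi finite_univ fun _ _ => isOpen_Ioo
  have hclosure : closure cube = closedCube := by
    simp only [cube, closedCube, closure_pi_set, closure_Ioo zero_ne_one]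
  have hK : IsCompact closedCube := isCompact_univ_pi fun _ => isCompact_Icc
  have hsub : cube ⊆ closedCube := hclosure ▸ subset_closure
  have hint : ∀ k, IntegrableOn (fun x => exp (-(V x - Γ k * Vt x) / T k)) cube := fun k =>
    ((continuous_exp.comp_continuousOn ((hV.sub (continuousOn_const.mul hVt)).neg.div_const
      _)).integrableOn_compact hK).mono_set hsub
  have hV' : ContinuousOn V (closure cube) := by rwa [hclosure]
  set m := sInf (V '' closedCube)
  have hK₀ : closedCube.Nonempty := ⟨fun _ => 0, fun _ _ => by simp⟩
  obtain ⟨x₀, hx₀, hVx₀⟩ : m ∈ V '' closedCube :=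
    (hK.image_of_continuousOn hV).sInf_mem (hK₀.image V)
  obtain ⟨M, hM⟩ := hK.exists_bound_of_continuousOn hVt
  set U := cube ∩ V ⁻¹' Iio (m + θ / 2)
  have hU₀ : volume U ≠ 0 :=
    (hcube.measure_inter_preimage_Iio_pos hV' (hclosure ▸ hx₀) (by linarith)).ne'
  have hU : MeasurableSet U :=
    ((hV'.mono subset_closure).isOpen_inter_preimage hcube isOpen_Iio).measurableSet
  have hbound := fun k => setIntegral_exp_perturbed_div_le (hint k) (fun x (hx : x ∈ S) => hx.1)
    inter_subset_left hU (measure_ne_top_of_subset hsub hK.measure_ne_top) hU₀ (hT k) (hΓ k)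
    (fun x hx => by simpa using hM x (hsub hx)) (a := m + θ) (fun x (hx : x ∈ S) => hx.2)
    (fun x (hx : x ∈ U) => le_of_lt hx.2)
  refine squeeze_zero (fun k => div_nonneg (integral_nonneg fun _ => (exp_pos _).le)
    (integral_nonneg fun _ => (exp_pos _).le)) hbound ?_
  have hT' : Tendsto T atTop (𝓝[>] 0) :=
    tendsto_nhdsWithin_iff.mpr ⟨hTlim, Eventually.of_forall hT⟩
  simpa using (tendsto_exp_div_of_tendsto_div hT' hratio (2 * M)
    (by linarith : 0 < m + θ - (m + θ / 2))).const_mul (volume.real S / volume.real U)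
end
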